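/- Let n ≥ 2, let Ω ⊆ ℂⁿ be a domain and let a ∈ Ω. Then every holomorphic function f on Ω \ {a} has a (unique) holomorphic extension F to Ω, i.e. F is holomorphic on Ω and F = f on Ω \ {a}. In particular, holomorphic functions of n ≥ 2 variables have no isolated singularities. -/

import Mathlib

/-!
Near `a`, take the Cauchy integral of `f` in one variable `zᵢ` over a circle `|ζ - aᵢ| = R`.
Its integrand only involves points with `|zᵢ - aᵢ| = R`, which stay away from the
singularity, so it is holomorphic in all variables near `a`. By the one-variable Cauchy formula
it equals `f` at every `z` whose slice in direction `eᵢ` misses `a`, i.e. whenever `zⱼ ≠ aⱼ` for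
some second index `j ≠ i` (here `n ≥ 2` is used); these points are dense, so it equals `f` on the
whole punctured ball. Uniqueness holds because `a` is not an isolated point.
-/

open Metric Set Function MeasureTheory
open scoped Real Topology

theorem Set.EqOn.of_diff_singleton {X Y : Type*} [TopologicalSpace X] [TopologicalSpace Y]
    [T2Space Y] {Ω : Set X} {a : X} [(𝓝[≠] a).NeBot] {f g : X → Y} (hΩ : IsOpen Ω)
    (hf : ContinuousOn f Ω) (hg : ContinuousOn g Ω) (h : EqOn f g (Ω \ {a})) : EqOn f g Ω :=
  h.of_subset_closure hf hg sdiff_subset (by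
    simpa only [sdiff_eq] using (dense_compl_singleton a).open_subset_closure_inter hΩ)

section CircleIntegral

variable {E G : Type*} [NormedAddCommGroup E] [NormedSpace ℂ E] [NormedAddCommGroup G]
  [NormedSpace ℂ G]

theorem norm_fderiv_le_of_forall_norm_le {f : E → G} {c : E} {r M : ℝ}
    (hd : DifferentiableOn ℂ f (ball c r)) (hM : ∀ x ∈ ball c r, ‖f x‖ ≤ M) (hr : 0 < r) :
    ‖fderiv ℂ f c‖ ≤ 2 * M / r := by
  refine Complex.norm_fderiv_le_div_of_mapsTo_ball hd (fun x hx => ?_) hr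
  rw [mem_closedBall, dist_eq_norm]
  linarith [norm_sub_le (f x) (f c), hM x hx, hM c (mem_ball_self hr)]

theorem hasFDerivAt_partial_of_differentiableAt_uncurry {F : E → ℂ → G} {x : E} {ζ : ℂ}
    (hF : DifferentiableAt ℂ (uncurry F) (x, ζ)) :
    HasFDerivAt (fun y => F y ζ) ((fderiv ℂ (uncurry F) (x, ζ)).comp (.inl ℂ E ℂ)) x :=
  hF.hasFDerivAt.comp (f := fun y => (y, ζ)) x (hasFDerivAt_prodMk_left x ζ)

variable [FiniteDimensional ℂ E] [FiniteDimensional ℂ G]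

theorem differentiableOn_circleIntegral_of_differentiableAt_uncurry {F : E → ℂ → G}
    {U : Set E} {c : ℂ} {R M : ℝ} (hU : IsOpen U) (hR : 0 ≤ R)
    (hF : ∀ x ∈ U, ∀ ζ ∈ sphere c R, DifferentiableAt ℂ (uncurry F) (x, ζ))
    (hM : ∀ x ∈ U, ∀ ζ ∈ sphere c R, ‖F x ζ‖ ≤ M) :
    DifferentiableOn ℂ (fun x => ∮ ζ in C(c, R), F x ζ) U := by
  borelize E G
  intro x₀ hx₀
  obtain ⟨ε, hε, hεU⟩ := Metric.isOpen_iff.1 hU x₀ hx₀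
  have hsub : ∀ x ∈ ball x₀ (ε / 2), ball x (ε / 2) ⊆ U := fun x hx y hy =>
    hεU (by linarith [mem_ball.1 hx, mem_ball.1 hy, dist_triangle y x x₀] : dist y x₀ < ε)
  have hxU : ∀ x ∈ ball x₀ (ε / 2), x ∈ U := fun x hx => hsub x hx (mem_ball_self (by positivity))
  have hζ : ∀ θ, circleMap c R θ ∈ sphere c R := circleMap_mem_sphere c hR
  set Φ : E → ℝ → G := fun x θ => (circleMap 0 R θ * Complex.I) • F x (circleMap c R θ)
  set Φ' : E → ℝ → E →L[ℂ] G := fun x θ =>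
    (circleMap 0 R θ * Complex.I) • (fderiv ℂ (uncurry F) (x, circleMap c R θ)).comp (.inl ℂ E ℂ)
  have hcont : ∀ x ∈ U, Continuous (Φ x) := by
    intro x hx
    refine ((continuous_circleMap 0 R).mul continuous_const).smul
      (continuous_iff_continuousAt.2 fun θ => ?_)
    exact (hF x hx _ (hζ θ)).continuousAt.comp (f := fun θ => (x, circleMap c R θ)) (by fun_prop)
  have hderiv : ∀ θ, ∀ x ∈ ball x₀ (ε / 2), HasFDerivAt (Φ · θ) (Φ' x θ) x := fun θ x hx =>
    (hasFDerivAt_partial_of_differentiableAt_uncurry (hF x (hxU x hx) _ (hζ θ))).const_smul _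
  have hbound : ∀ θ, ∀ x ∈ ball x₀ (ε / 2), ‖Φ' x θ‖ ≤ |R| * (2 * M / (ε / 2)) := by
    intro θ x hx
    have hpartial := hasFDerivAt_partial_of_differentiableAt_uncurry (hF x (hxU x hx) _ (hζ θ))
    have hcauchy : ‖fderiv ℂ (F · (circleMap c R θ)) x‖ ≤ 2 * M / (ε / 2) :=
      norm_fderiv_le_of_forall_norm_le
        (fun y hy => (hasFDerivAt_partial_of_differentiableAt_uncurry
          (hF y (hsub x hx hy) _ (hζ θ))).differentiableAt.differentiableWithinAt)
        (fun y hy => hM y (hsub x hx hy) _ (hζ θ)) (half_pos hε)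
    rw [norm_smul, norm_mul, norm_circleMap_zero, Complex.norm_I, mul_one, ← hpartial.fderiv]
    gcongr
  have hmeas : AEStronglyMeasurable (Φ' x₀) (volume.restrict (Set.uIoc 0 (2 * π))) := by
    -- the partial derivative is a slice of the joint one, which is measurable in the point
    have hfderiv : Measurable fun θ => fderiv ℂ (uncurry F) (x₀, circleMap c R θ) :=
      (measurable_fderiv ℂ (uncurry F)).comp
        (measurable_const.prodMk (continuous_circleMap c R).measurable)
    exact (((continuous_circleMap 0 R).mul continuous_const).measurable.smul
      ((continuous_id.clm_comp continuous_const).measurable.comp hfderiv)).aestronglyMeasurable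
  have hΦ : (fun x => ∮ ζ in C(c, R), F x ζ) = fun x => ∫ θ in 0..2 * π, Φ x θ := by
    funext x; simp only [circleIntegral, deriv_circleMap, Φ]
  rw [hΦ]
  exact (intervalIntegral.hasFDerivAt_integral_of_dominated_of_fderiv_le
    (ball_mem_nhds x₀ (half_pos hε))
    (Filter.eventually_of_mem (hU.mem_nhds hx₀) fun x hx => (hcont x hx).aestronglyMeasurable)
    ((hcont x₀ hx₀).intervalIntegrable _ _) hmeas
    (ae_of_all _ fun θ _ => hbound θ) intervalIntegrable_const
    (ae_of_all _ fun θ _ => hderiv θ)).differentiableAt.differentiableWithinAt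

end CircleIntegral

section Slice

variable {ι : Type*} [Fintype ι] [DecidableEq ι]

theorem differentiable_uncurry_update (i : ι) :
    Differentiable ℂ (uncurry fun (x : ι → ℂ) (ζ : ℂ) => update x i ζ) := by
  refine differentiable_pi.2 fun j => ?_
  rcases eq_or_ne j i with rfl | hji
  · simp [uncurry]
  · simp only [uncurry, update_of_ne hji]
    fun_prop

theorem update_mem_closedBall {x a : ι → ℂ} {i : ι} {ζ : ℂ} {r : ℝ} (hx : x ∈ closedBall a r)
    (hζ : ζ ∈ closedBall (a i) r) : update x i ζ ∈ closedBall a r := by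
  rw [mem_closedBall, dist_pi_le_iff (dist_nonneg.trans hx)]
  intro j
  rcases eq_or_ne j i with rfl | hji
  · simpa using hζ
  · simpa [update_of_ne hji] using (dist_le_pi_dist x a j).trans hx

noncomputable def sliceCauchyIntegral (f : (ι → ℂ) → ℂ) (i : ι) (c : ℂ) (R : ℝ) (z : ι → ℂ) :
    ℂ :=
  (2 * π * Complex.I)⁻¹ • ∮ ζ in C(c, R), (ζ - z i)⁻¹ • f (update z i ζ)

theorem sliceCauchyIntegral_eq_self {f : (ι → ℂ) → ℂ} {i : ι} {c : ℂ} {R : ℝ} {z : ι → ℂ}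
    (hf : ∀ ζ ∈ closedBall c R, DifferentiableAt ℂ f (update z i ζ)) (hz : z i ∈ ball c R) :
    sliceCauchyIntegral f i c R z = f z := by
  have hslice : DifferentiableOn ℂ (fun ζ => f (update z i ζ)) (closedBall c R) := fun ζ hζ =>
    ((hf ζ hζ).comp ζ ((differentiable_uncurry_update i).comp
      (differentiable_const z |>.prodMk differentiable_id) ζ)).differentiableWithinAt
  rw [sliceCauchyIntegral, (hslice.mono closure_ball_subset_closedBall).diffContOnCl
    |>.two_pi_i_inv_smul_circleIntegral_sub_inv_smul hz, update_eq_self]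

theorem differentiableOn_sliceCauchyIntegral {f : (ι → ℂ) → ℂ} {U : Set (ι → ℂ)} {i : ι} {c : ℂ}
    {R ρ M : ℝ} (hU : IsOpen U) (hρ : 0 ≤ ρ) (hρR : ρ < R)
    (hUc : ∀ x ∈ U, x i ∈ closedBall c ρ)
    (hf : ∀ x ∈ U, ∀ ζ ∈ sphere c R, DifferentiableAt ℂ f (update x i ζ))
    (hM : ∀ x ∈ U, ∀ ζ ∈ sphere c R, ‖f (update x i ζ)‖ ≤ M) :
    DifferentiableOn ℂ (sliceCauchyIntegral f i c R) U := by
  have hsep : ∀ x ∈ U, ∀ ζ ∈ sphere c R, R - ρ ≤ ‖ζ - x i‖ := by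
    intro x hx ζ hζ
    rw [← dist_eq_norm]
    linarith [dist_triangle ζ (x i) c, mem_sphere.1 hζ, mem_closedBall.1 (hUc x hx)]
  refine (differentiableOn_circleIntegral_of_differentiableAt_uncurry
    (F := fun x ζ => (ζ - x i)⁻¹ • f (update x i ζ)) (M := (R - ρ)⁻¹ * M) hU (by linarith)
    (fun x hx ζ hζ => ?_) (fun x hx ζ hζ => ?_)).const_smul (2 * π * Complex.I)⁻¹
  · have hne : ζ - x i ≠ 0 := norm_pos_iff.1 ((sub_pos.2 hρR).trans_le (hsep x hx ζ hζ))
    have hkernel : DifferentiableAt ℂ (fun p : (ι → ℂ) × ℂ => (p.2 - p.1 i)⁻¹) (x, ζ) :=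
      (by fun_prop : DifferentiableAt ℂ (fun p : (ι → ℂ) × ℂ => p.2 - p.1 i) (x, ζ)).inv hne
    exact hkernel.smul ((hf x hx ζ hζ).comp (x, ζ) (differentiable_uncurry_update i (x, ζ)))
  · rw [norm_smul, norm_inv]
    exact mul_le_mul (inv_anti₀ (sub_pos.2 hρR) (hsep x hx ζ hζ)) (hM x hx ζ hζ)
      (norm_nonneg _) (inv_nonneg.2 (sub_pos.2 hρR).le)

theorem differentiableOn_sliceCauchyIntegral_ball {f : (ι → ℂ) → ℂ} {a : ι → ℂ} {R : ℝ} (i : ι)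
    (hR : 0 < R) (hf : ∀ z ∈ closedBall a R \ {a}, DifferentiableAt ℂ f z) :
    DifferentiableOn ℂ (sliceCauchyIntegral f i (a i) R) (ball a (R / 2)) := by
  set K := closedBall a R ∩ {q | R / 2 ≤ dist (q i) (a i)}
  have hK : IsCompact K :=
    (isCompact_closedBall a R).inter_right (isClosed_le continuous_const (by fun_prop))
  have hKf : K ⊆ closedBall a R \ {a} := by
    refine fun q hq => ⟨hq.1, fun hqa => ?_⟩
    have hqi : R / 2 ≤ dist (q i) (a i) := hq.2
    rw [mem_singleton_iff.1 hqa, dist_self] at hqi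
    linarith
  obtain ⟨M, hM⟩ := hK.exists_bound_of_continuousOn
    (fun q hq => (hf q (hKf hq)).continuousAt.continuousWithinAt)
  have hupdate : ∀ x ∈ ball a (R / 2), ∀ ζ ∈ sphere (a i) R, update x i ζ ∈ K := by
    intro x hx ζ hζ
    refine ⟨update_mem_closedBall (ball_subset_closedBall.trans (closedBall_subset_closedBall
      (by linarith)) hx) (sphere_subset_closedBall hζ), ?_⟩
    simp only [mem_ofPred_eq, update_self, mem_sphere.1 hζ]
    linarith
  exact differentiableOn_sliceCauchyIntegral isOpen_ball (half_pos hR).le (half_lt_self hR)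
    (fun x hx => (dist_le_pi_dist x a i).trans (mem_ball.1 hx).le)
    (fun x hx ζ hζ => hf _ (hKf (hupdate x hx ζ hζ))) (fun x hx ζ hζ => hM _ (hupdate x hx ζ hζ))

theorem eqOn_sliceCauchyIntegral_ball {f : (ι → ℂ) → ℂ} {a : ι → ℂ} {R : ℝ} {i j : ι}
    (hij : i ≠ j) (hR : 0 < R) (hf : ∀ z ∈ closedBall a R \ {a}, DifferentiableAt ℂ f z) :
    EqOn (sliceCauchyIntegral f i (a i) R) f (ball a (R / 2) \ {a}) := by
  have hball : ball a (R / 2) ⊆ closedBall a R :=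
    ball_subset_closedBall.trans (closedBall_subset_closedBall (by linarith))
  have hgeneric :
      EqOn (sliceCauchyIntegral f i (a i) R) f (ball a (R / 2) ∩ {z | z j ≠ a j}) := by
    refine fun z hz => sliceCauchyIntegral_eq_self (fun ζ hζ => hf _ ⟨?_, fun hza => ?_⟩) ?_
    · exact update_mem_closedBall (hball hz.1) hζ
    · exact hz.2 (by simpa [update_of_ne hij.symm] using congr_fun (mem_singleton_iff.1 hza) j)
    · exact mem_ball.2 ((dist_le_pi_dist z a i).trans_lt ((mem_ball.1 hz.1).trans (half_lt_self hR)))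
  have hdense : Dense {z : ι → ℂ | z j ≠ a j} :=
    (dense_compl_singleton (a j)).preimage (isOpenMap_eval j)
  refine hgeneric.of_subset_closure
    ((differentiableOn_sliceCauchyIntegral_ball i hR hf).continuousOn.mono sdiff_subset)
    (fun z hz => (hf z ⟨hball hz.1, hz.2⟩).continuousAt.continuousWithinAt)
    (fun z hz => ⟨hz.1, fun hza => hz.2 (by rw [mem_singleton_iff.1 hza])⟩)
    (sdiff_subset.trans (hdense.open_subset_closure_inter isOpen_ball))

theorem exists_differentiableOn_eqOn_of_differentiableOn_diff_singleton {i j : ι} (hij : i ≠ j)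
    {Ω : Set (ι → ℂ)} (hΩ : IsOpen Ω) {a : ι → ℂ} (ha : a ∈ Ω) {f : (ι → ℂ) → ℂ}
    (hf : DifferentiableOn ℂ f (Ω \ {a})) :
    ∃ F : (ι → ℂ) → ℂ, DifferentiableOn ℂ F Ω ∧ EqOn F f (Ω \ {a}) := by
  obtain ⟨R, hR, hRΩ⟩ := nhds_basis_closedBall.mem_iff.1 (hΩ.mem_nhds ha)
  have hΩa : IsOpen (Ω \ {a}) := hΩ.sdiff isClosed_singleton
  have hfR : ∀ z ∈ closedBall a R \ {a}, DifferentiableAt ℂ f z := fun z hz =>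
    hf.differentiableAt (hΩa.mem_nhds ⟨hRΩ hz.1, hz.2⟩)
  set g := sliceCauchyIntegral f i (a i) R
  have hgf := eqOn_sliceCauchyIntegral_ball hij hR hfR
  refine ⟨update f a (g a), fun z hz => ?_, fun z hz => update_of_ne hz.2 _ _⟩
  rcases eq_or_ne z a with rfl | hza
  · have hg : update f z (g z) =ᶠ[𝓝 z] g := by
      filter_upwards [ball_mem_nhds z (half_pos hR)] with y hy
      rcases eq_or_ne y z with rfl | hyz
      · exact update_self ..
      · exact (update_of_ne hyz ..).trans (hgf ⟨hy, hyz⟩).symm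
    exact (((differentiableOn_sliceCauchyIntegral_ball i hR hfR).differentiableAt
      (ball_mem_nhds z (half_pos hR))).congr_of_eventuallyEq hg).differentiableWithinAt
  · have hf' : update f a (g a) =ᶠ[𝓝 z] f := by
      filter_upwards [isOpen_compl_singleton.mem_nhds hza] with y hy
      exact update_of_ne hy ..
    exact ((hf.differentiableAt (hΩa.mem_nhds ⟨hz, hza⟩)).congr_of_eventuallyEq
      hf').differentiableWithinAt

end Slice

theorem no_isolated_singularity_general (n : ℕ) (hn : 2 ≤ n) (Ω : Set (Fin n → ℂ))
    (hΩopen : IsOpen Ω)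
    (a : Fin n → ℂ) (ha : a ∈ Ω)
    (f : (Fin n → ℂ) → ℂ) (hf : DifferentiableOn ℂ f (Ω \ {a})) :
    ∃ F : (Fin n → ℂ) → ℂ,
      (DifferentiableOn ℂ F Ω ∧ Set.EqOn F f (Ω \ {a})) ∧
      ∀ G : (Fin n → ℂ) → ℂ,
        DifferentiableOn ℂ G Ω → Set.EqOn G f (Ω \ {a}) → Set.EqOn G F Ω := by
  obtain ⟨F, hFd, hFf⟩ := exists_differentiableOn_eqOn_of_differentiableOn_diff_singleton
    (i := ⟨0, by omega⟩) (j := ⟨1, by omega⟩) (by simp [Fin.ext_iff]) hΩopen ha hf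
  have : Nonempty (Fin n) := ⟨⟨0, by omega⟩⟩
  have := Module.punctured_nhds_neBot ℂ (Fin n → ℂ) a
  exact ⟨F, ⟨hFd, hFf⟩, fun G hGd hGf =>
    (hGf.trans hFf.symm).of_diff_singleton hΩopen hGd.continuousOn hFd.continuousOn⟩

/-- **No isolated singularities in several variables.** Let `n ≥ 2`, `Ω ⊆ ℂⁿ` a domain
and `a ∈ Ω`. Every holomorphic function on `Ω \ {a}` extends (uniquely) to a holomorphic
function on `Ω`. -/
theorem no_isolated_singularity (n : ℕ) (hn : 2 ≤ n) (Ω : Set (Fin n → ℂ))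
    (hΩopen : IsOpen Ω) (hΩconn : IsConnected Ω)
    (a : Fin n → ℂ) (ha : a ∈ Ω)
    (f : (Fin n → ℂ) → ℂ) (hf : DifferentiableOn ℂ f (Ω \ {a})) :
    ∃ F : (Fin n → ℂ) → ℂ,
      (DifferentiableOn ℂ F Ω ∧ Set.EqOn F f (Ω \ {a})) ∧
      ∀ G : (Fin n → ℂ) → ℂ,
        DifferentiableOn ℂ G Ω → Set.EqOn G f (Ω \ {a}) → Set.EqOn G F Ω :=
  no_isolated_singularity_general n hn Ω hΩopen a ha f hf
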